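/- Let K be a field, q ∈ K* not a root of unity, and a ∈ K[h,h⁻¹] a nonzero non-invertible Laurent polynomial which is simple in the sense that there is no α ∈ K* with a(α) = a(qα) = 0. Then the quantum generalized Weyl algebra A(a(h),q) admits no K-algebra endomorphism ψ with ψ(h) ∈ K*. -/

import Mathlib

/-!
If `ψ(h) = α` is a nonzero scalar, it is central, so applying `ψ` to `xh = qhx` gives
`(1 - q) α ψ(x) = 0`, hence `ψ(x) = 0` as `q ≠ 1`; likewise `ψ(y) = 0`. Then
`ψ(xy) = a(qα)` and `ψ(yx) = a(α)` both vanish, contradicting simplicity of `a`, provided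
`K → A(a(h),q)` is injective. That holds because `A(a(h),q)` acts on `ℤ →₀ K` by
`h eₙ = qⁿ eₙ`, `x eₙ = eₙ₋₁`, `y eₙ = a(qⁿ⁺¹) eₙ₊₁`.
-/

/-- Integer power of an element `h` of a ring, using a chosen "inverse" `h'` for
negative exponents. -/
noncomputable def zpowP {A : Type*} [Monoid A] (h h' : A) (i : ℤ) : A :=
  if 0 ≤ i then h ^ i.toNat else h' ^ (-i).toNat

/-- Evaluation of the Laurent polynomial `a(s·h) = Σ aᵢ sⁱ hⁱ` at an element `h`
of a `K`-algebra with chosen inverse `h'`; here `a : ℤ →₀ K` records the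
coefficients of `a`. -/
noncomputable def evalP {K A : Type*} [Field K] [Ring A] [Algebra K A]
    (a : ℤ →₀ K) (s : K) (h h' : A) : A :=
  a.sum fun i c => (c * s ^ i) • zpowP h h' i

/-- The defining relations of the quantum generalized Weyl algebra `A(a(h),q)`:
generators `x = ι 0`, `y = ι 1`, `h = ι 2`, `h⁻¹ = ι 3`, and relations
`xh = qhx`, `yh = q⁻¹hy`, `hh⁻¹ = h⁻¹h = 1`, `xy = a(qh)`, `yx = a(h)`. -/
inductive relG (K : Type*) [Field K] (q : K) (a : ℤ →₀ K) :
    FreeAlgebra K (Fin 4) → FreeAlgebra K (Fin 4) → Prop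
  | xh : relG K q a (FreeAlgebra.ι K 0 * FreeAlgebra.ι K 2)
      (q • (FreeAlgebra.ι K 2 * FreeAlgebra.ι K 0))
  | yh : relG K q a (FreeAlgebra.ι K 1 * FreeAlgebra.ι K 2)
      (q⁻¹ • (FreeAlgebra.ι K 2 * FreeAlgebra.ι K 1))
  | hinv : relG K q a (FreeAlgebra.ι K 2 * FreeAlgebra.ι K 3) 1
  | invh : relG K q a (FreeAlgebra.ι K 3 * FreeAlgebra.ι K 2) 1
  | xy : relG K q a (FreeAlgebra.ι K 0 * FreeAlgebra.ι K 1)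
      (evalP a q (FreeAlgebra.ι K 2) (FreeAlgebra.ι K 3))
  | yx : relG K q a (FreeAlgebra.ι K 1 * FreeAlgebra.ι K 0)
      (evalP a 1 (FreeAlgebra.ι K 2) (FreeAlgebra.ι K 3))

/-- The quantum generalized Weyl algebra `A(a(h),q)`. -/
abbrev GWA (K : Type*) [Field K] (q : K) (a : ℤ →₀ K) := RingQuot (relG K q a)

/-- The images of the generators `x, y, h, h⁻¹` in `A(a(h),q)`. -/
noncomputable def gwaGen (K : Type*) [Field K] (q : K) (a : ℤ →₀ K) (i : Fin 4) :
    GWA K q a :=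
  RingQuot.mkAlgHom K (relG K q a) (FreeAlgebra.ι K i)

noncomputable def laurentEval {K : Type*} [Field K] (a : ℤ →₀ K) (β : K) : K :=
  a.sum fun i c => c * β ^ i

section

variable {K A B : Type*} [Field K] [Ring A] [Ring B] [Algebra K A] [Algebra K B]

lemma map_evalP (f : A →ₐ[K] B) (a : ℤ →₀ K) (s : K) (h h' : A) :
    f (evalP a s h h') = evalP a s (f h) (f h') := by
  simp only [evalP, map_finsuppSum, map_smul, zpowP]
  refine Finsupp.sum_congr fun i _ => ?_
  split <;> simp only [map_pow]

lemma evalP_algebraMap (a : ℤ →₀ K) (s β : K) :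
    evalP a s (algebraMap K A β) (algebraMap K A β⁻¹) =
      algebraMap K A (laurentEval a (s * β)) := by
  simp only [evalP, laurentEval, zpowP, map_finsuppSum, Algebra.smul_def, ← map_pow]
  refine Finsupp.sum_congr fun i _ => ?_
  rw [← apply_ite, ← map_mul]
  congr 1
  split_ifs with hi
  · rw [← zpow_natCast, Int.toNat_of_nonneg hi, mul_zpow, mul_assoc]
  · rw [← zpow_natCast, Int.toNat_of_nonneg (by omega), inv_zpow', neg_neg, mul_zpow, mul_assoc]

lemma eq_zero_of_mul_algebraMap_eq_smul {α s : K} (hα : α ≠ 0) (hs : s ≠ 1) {z : A}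
    (h : z * algebraMap K A α = s • (algebraMap K A α * z)) : z = 0 := by
  rw [← Algebra.commutes, ← Algebra.smul_def] at h
  have : (α * (1 - s)) • z = 0 := by
    rw [mul_sub, mul_one, sub_smul, mul_comm, mul_smul, ← h, sub_self]
  exact (smul_eq_zero.mp this).resolve_left (mul_ne_zero hα (sub_ne_zero.mpr hs.symm))

end

section WeightedShift

variable {K : Type*} [Field K]

noncomputable def weightedShift (σ : ℤ → ℤ) (w : ℤ → K) : Module.End K (ℤ →₀ K) :=
  Finsupp.lsum K fun n => w n • Finsupp.lsingle (σ n)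

@[simp]
lemma weightedShift_single (σ : ℤ → ℤ) (w : ℤ → K) (n : ℤ) (c : K) :
    weightedShift σ w (Finsupp.single n c) = Finsupp.single (σ n) (w n * c) := by
  rw [weightedShift, Finsupp.lsum_single, LinearMap.smul_apply, Finsupp.lsingle_apply,
    Finsupp.smul_single']

lemma weightedShift_mul (σ τ : ℤ → ℤ) (v w : ℤ → K) :
    weightedShift σ v * weightedShift τ w = weightedShift (σ ∘ τ) fun n => v (τ n) * w n := by
  refine Finsupp.lhom_ext fun n c => ?_
  simp only [Module.End.mul_apply, weightedShift_single, Function.comp_apply, mul_assoc]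

lemma smul_weightedShift (s : K) (σ : ℤ → ℤ) (w : ℤ → K) :
    s • weightedShift σ w = weightedShift σ (s • w) := by
  refine Finsupp.lhom_ext fun n c => ?_
  simp only [LinearMap.smul_apply, weightedShift_single, Finsupp.smul_single, smul_eq_mul,
    Pi.smul_apply, mul_assoc]

lemma weightedShift_id_one : weightedShift id (1 : ℤ → K) = 1 := by
  refine Finsupp.lhom_ext fun n c => ?_
  simp only [weightedShift_single, id, Pi.one_apply, one_mul, Module.End.one_apply]

lemma weightedShift_id_pow (w : ℤ → K) (m : ℕ) :
    weightedShift id w ^ m = weightedShift id (w ^ m) := by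
  induction m with
  | zero => rw [pow_zero, pow_zero, weightedShift_id_one]
  | succ m ih => rw [pow_succ, ih, weightedShift_mul, pow_succ]; rfl

lemma zpowP_weightedShift_id (w : ℤ → K) (i : ℤ) :
    zpowP (weightedShift id w) (weightedShift id w⁻¹) i = weightedShift id fun n => w n ^ i := by
  unfold zpowP
  split_ifs with hi
  · rw [weightedShift_id_pow]
    congr 1
    funext n
    rw [Pi.pow_apply, ← zpow_natCast, Int.toNat_of_nonneg hi]
  · rw [weightedShift_id_pow]
    congr 1
    funext n
    rw [Pi.pow_apply, Pi.inv_apply, ← zpow_natCast, Int.toNat_of_nonneg (by omega), inv_zpow',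
      neg_neg]

lemma evalP_weightedShift_id (a : ℤ →₀ K) (s : K) (w : ℤ → K) :
    evalP a s (weightedShift id w) (weightedShift id w⁻¹) =
      weightedShift id fun n => laurentEval a (s * w n) := by
  refine Finsupp.lhom_ext fun n c => ?_
  simp only [evalP, laurentEval, zpowP_weightedShift_id, Finsupp.sum, LinearMap.coe_sum,
    Finset.sum_apply, LinearMap.smul_apply, weightedShift_single, Finset.sum_mul,
    Finsupp.single_finsetSum, Finsupp.smul_single, smul_eq_mul, id, mul_zpow]
  exact Finset.sum_congr rfl fun i _ => congrArg _ (by ring)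

end WeightedShift

namespace GWA

variable (K : Type*) [Field K] (q : K) (a : ℤ →₀ K)

lemma x_mul_h : gwaGen K q a 0 * gwaGen K q a 2 = q • (gwaGen K q a 2 * gwaGen K q a 0) := by
  simpa only [gwaGen, map_mul, map_smul] using
    RingQuot.mkAlgHom_rel K (relG.xh (K := K) (q := q) (a := a))

lemma y_mul_h : gwaGen K q a 1 * gwaGen K q a 2 = q⁻¹ • (gwaGen K q a 2 * gwaGen K q a 1) := by
  simpa only [gwaGen, map_mul, map_smul] using
    RingQuot.mkAlgHom_rel K (relG.yh (K := K) (q := q) (a := a))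

lemma h_mul_hinv : gwaGen K q a 2 * gwaGen K q a 3 = 1 := by
  simpa only [gwaGen, map_mul, map_one] using
    RingQuot.mkAlgHom_rel K (relG.hinv (K := K) (q := q) (a := a))

lemma x_mul_y : gwaGen K q a 0 * gwaGen K q a 1 = evalP a q (gwaGen K q a 2) (gwaGen K q a 3) := by
  simpa only [gwaGen, map_mul, map_evalP] using
    RingQuot.mkAlgHom_rel K (relG.xy (K := K) (q := q) (a := a))

lemma y_mul_x : gwaGen K q a 1 * gwaGen K q a 0 = evalP a 1 (gwaGen K q a 2) (gwaGen K q a 3) := by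
  simpa only [gwaGen, map_mul, map_evalP] using
    RingQuot.mkAlgHom_rel K (relG.yx (K := K) (q := q) (a := a))

noncomputable def shiftGen : Fin 4 → Module.End K (ℤ →₀ K) :=
  ![weightedShift (· - 1) 1, weightedShift (· + 1) fun n => laurentEval a (q ^ (n + 1)),
    weightedShift id fun n => q ^ n, weightedShift id (fun n => q ^ n)⁻¹]

variable {K q a}

lemma shiftGen_rel (hq0 : q ≠ 0) ⦃u v : FreeAlgebra K (Fin 4)⦄ (h : relG K q a u v) :
    FreeAlgebra.lift K (shiftGen K q a) u = FreeAlgebra.lift K (shiftGen K q a) v := by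
  have lift_evalP (s : K) := map_evalP (FreeAlgebra.lift K (shiftGen K q a)) a s
    (FreeAlgebra.ι K 2) (FreeAlgebra.ι K 3)
  cases h
  all_goals
    simp only [map_mul, map_smul, map_one, lift_evalP, FreeAlgebra.lift_ι_apply]
    simp only [shiftGen, Matrix.cons_val, evalP_weightedShift_id, weightedShift_mul,
      smul_weightedShift, ← weightedShift_id_one]
    congr 1 <;> funext n <;>
      simp only [Function.comp_apply, id, Pi.one_apply, Pi.smul_apply, Pi.inv_apply, smul_eq_mul,
        one_mul, mul_one, sub_add_cancel, add_sub_cancel_right, zpow_add_one₀ hq0,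
        zpow_sub_one₀ hq0] <;>
      field_simp

noncomputable def shiftRep (hq0 : q ≠ 0) : GWA K q a →ₐ[K] Module.End K (ℤ →₀ K) :=
  RingQuot.liftAlgHom K ⟨FreeAlgebra.lift K (shiftGen K q a), shiftGen_rel hq0⟩

lemma algebraMap_injective (hq0 : q ≠ 0) : Function.Injective (algebraMap K (GWA K q a)) := by
  refine Function.Injective.of_comp (f := shiftRep hq0) ?_
  rw [← AlgHom.coe_toRingHom, ← RingHom.coe_comp, AlgHom.comp_algebraMap]
  exact (algebraMap K (Module.End K (ℤ →₀ K))).injective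

end GWA

theorem stmt_11_general (K : Type*) [Field K] (q : K) (hq0 : q ≠ 0)
    (hq : ∀ n : ℤ, n ≠ 0 → q ^ n ≠ 1)
    (a : ℤ →₀ K)
    (hsimple : ¬ ∃ α : K, α ≠ 0 ∧ (a.sum fun i c => c * α ^ i) = 0 ∧
      (a.sum fun i c => c * (q * α) ^ i) = 0) :
    ¬ ∃ (ψ : GWA K q a →ₐ[K] GWA K q a) (α : K), α ≠ 0 ∧
      ψ (gwaGen K q a 2) = algebraMap K (GWA K q a) α := by
  rintro ⟨ψ, α, hα, hψh⟩
  have hq1 : q ≠ 1 := fun h => hq 1 one_ne_zero (by rw [h, one_zpow])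
  have hψx : ψ (gwaGen K q a 0) = 0 := eq_zero_of_mul_algebraMap_eq_smul hα hq1 <| by
    simpa only [map_mul, map_smul, hψh] using congrArg ψ (GWA.x_mul_h K q a)
  have hψy : ψ (gwaGen K q a 1) = 0 :=
    eq_zero_of_mul_algebraMap_eq_smul hα (inv_ne_one.mpr hq1) <| by
      simpa only [map_mul, map_smul, hψh] using congrArg ψ (GWA.y_mul_h K q a)
  have hψhinv : ψ (gwaGen K q a 3) = algebraMap K (GWA K q a) α⁻¹ := by
    refine (left_inv_eq_right_inv (a := algebraMap K (GWA K q a) α) ?_ ?_).symm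
    · rw [← map_mul, inv_mul_cancel₀ hα, map_one]
    · simpa only [map_mul, map_one, hψh] using congrArg ψ (GWA.h_mul_hinv K q a)
  have root (s : K) (hxy : ψ (evalP a s (gwaGen K q a 2) (gwaGen K q a 3)) = 0) :
      laurentEval a (s * α) = 0 := by
    rw [map_evalP, hψh, hψhinv, evalP_algebraMap] at hxy
    exact GWA.algebraMap_injective hq0 (hxy.trans (map_zero _).symm)
  refine hsimple ⟨α, hα, ?_, root q ?_⟩
  · simpa only [one_mul, laurentEval] using
      root 1 (by rw [← GWA.y_mul_x, map_mul, hψy, zero_mul])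
  · rw [← GWA.x_mul_y, map_mul, hψx, zero_mul]

/-- Let `q ∈ K*` not be a root of unity and `a` a nonzero non-invertible Laurent
polynomial (encoded by its coefficients `a : ℤ →₀ K`) which is simple in the sense
that there is no `α ∈ K*` with `a(α) = a(qα) = 0`.  Then `A(a(h),q)` admits no
`K`-algebra endomorphism `ψ` with `ψ(h)` a nonzero scalar. -/
theorem stmt_11 (K : Type*) [Field K] (q : K) (hq0 : q ≠ 0)
    (hq : ∀ n : ℤ, n ≠ 0 → q ^ n ≠ 1)
    (a : ℤ →₀ K) (ha : a ≠ 0) (hainv : a.support.card ≠ 1)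
    (hsimple : ¬ ∃ α : K, α ≠ 0 ∧ (a.sum fun i c => c * α ^ i) = 0 ∧
      (a.sum fun i c => c * (q * α) ^ i) = 0) :
    ¬ ∃ (ψ : GWA K q a →ₐ[K] GWA K q a) (α : K), α ≠ 0 ∧
      ψ (gwaGen K q a 2) = algebraMap K (GWA K q a) α :=
  stmt_11_general K q hq0 hq a hsimple
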